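/- The collection of UPGMA cones P(C) for maximal chains C in Π_4 is not a fan: the cones P(C_1) and P(C_2), for C_1 = 1|2|3|4 ⋖ 3|4|12 ⋖ 4|123 ⋖ 1234 and C_2 = 1|2|3|4 ⋖ 2|4|13 ⋖ 4|123 ⋖ 1234, intersect in a cone having (0,0,0,1,1,1) as an extreme ray, but (0,0,0,1,1,1) is not an extreme ray of P(C_1) or of P(C_2); hence P(C_1) ∩ P(C_2) is not a common face. -/

import Mathlib

/-- `v` spans an extreme ray of the cone `P`. -/
def IsExtremeRay {α : Type*} (P : Set (α → ℝ)) (v : α → ℝ) : Prop :=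
  v ∈ P ∧ v ≠ 0 ∧ ∀ x ∈ P, ∀ y ∈ P, x + y = v →
    (∃ a : ℝ, 0 ≤ a ∧ x = a • v) ∧ (∃ b : ℝ, 0 ≤ b ∧ y = b • v)

/-- Coordinates on `ℝ^6` are ordered `d₁₂,d₁₃,d₁₄,d₂₃,d₂₄,d₃₄` (indices `0,…,5`).
The UPGMA cone of the chain `C₁ = 1|2|3|4 ⋖ 3|4|12 ⋖ 4|123 ⋖ 1234`:
first merge `{1,2}` (so `d₁₂` minimal), then merge `{3}` with `{1,2}` among `12|3|4`. -/
def upgmaConeC1 : Set (Fin 6 → ℝ) :=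
  {d | (∀ i, 0 ≤ d i) ∧
    d 0 ≤ d 1 ∧ d 0 ≤ d 2 ∧ d 0 ≤ d 3 ∧ d 0 ≤ d 4 ∧ d 0 ≤ d 5 ∧
    (d 1 + d 3) / 2 ≤ (d 2 + d 4) / 2 ∧ (d 1 + d 3) / 2 ≤ d 5}

/-- The UPGMA cone of the chain `C₂ = 1|2|3|4 ⋖ 2|4|13 ⋖ 4|123 ⋖ 1234`:
first merge `{1,3}` (so `d₁₃` minimal), then merge `{2}` with `{1,3}` among `13|2|4`. -/
def upgmaConeC2 : Set (Fin 6 → ℝ) :=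
  {d | (∀ i, 0 ≤ d i) ∧
    d 1 ≤ d 0 ∧ d 1 ≤ d 2 ∧ d 1 ≤ d 3 ∧ d 1 ≤ d 4 ∧ d 1 ≤ d 5 ∧
    (d 0 + d 3) / 2 ≤ (d 2 + d 5) / 2 ∧ (d 0 + d 3) / 2 ≤ d 4}

/-!
On the face `d₁₂ = d₁₃ = d₁₄ = 0` the second UPGMA inequality of `C₁` reads `d₂₃ ≤ d₂₄` and that
of `C₂` reads `d₂₃ ≤ d₃₄`. A decomposition `x + y = (0,0,0,1,1,1)` inside `P(C₁) ∩ P(C₂)` lives on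
this face, and there the two inequalities, holding for both `x` and `y`, force equality, so
`x` and `y` are multiples of `(0,0,0,1,1,1)`. In `P(C₁)` alone, `d₃₄` is only bounded below by
`d₂₃ / 2`, which gives the decomposition `(0,0,0,1,1,½) + (0,0,0,0,0,½)`; symmetrically for
`P(C₂)` with `d₂₄`. Finally, an extreme ray of an extreme subset of a cone is an extreme ray of the
cone, so the intersection cannot be a face of `P(C₁)`.
-/

section

variable {α : Type*}

theorem IsExtremeRay.of_isExtreme {P F : Set (α → ℝ)} {v : α → ℝ}
    (hP : ∀ c : ℝ, 0 < c → ∀ x ∈ P, c • x ∈ P) (hF : IsExtreme ℝ P F)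
    (hv : IsExtremeRay F v) : IsExtremeRay P v := by
  refine ⟨hF.subset hv.1, hv.2.1, fun x hx y hy hxy => ?_⟩
  -- `2z` is the midpoint of `z` and `3z`, and `v` is the midpoint of `2x` and `2y`.
  have mem_of_two_smul_mem : ∀ z ∈ P, (2 : ℝ) • z ∈ F → z ∈ F := fun z hz h2z =>
    hF.left_mem_of_mem_openSegment hz (hP 3 three_pos z hz) h2z
      ⟨1 / 2, 1 / 2, by norm_num, by norm_num, by norm_num, by module⟩
  have hv_mid : v ∈ openSegment ℝ ((2 : ℝ) • x) ((2 : ℝ) • y) :=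
    ⟨1 / 2, 1 / 2, by norm_num, by norm_num, by norm_num, by rw [← hxy]; module⟩
  exact hv.2.2
    x (mem_of_two_smul_mem x hx (hF.left_mem_of_mem_openSegment
      (hP 2 two_pos x hx) (hP 2 two_pos y hy) hv.1 hv_mid))
    y (mem_of_two_smul_mem y hy (hF.right_mem_of_mem_openSegment
      (hP 2 two_pos x hx) (hP 2 two_pos y hy) hv.1 hv_mid)) hxy

theorem not_isExtremeRay_of_add_eq {P : Set (α → ℝ)} {v x y : α → ℝ} (hx : x ∈ P) (hy : y ∈ P)
    (hxy : x + y = v) (hx_ne : ∀ a : ℝ, x ≠ a • v) : ¬ IsExtremeRay P v := by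
  rintro ⟨-, -, hv⟩
  obtain ⟨⟨a, -, rfl⟩, -⟩ := hv x hx y hy hxy
  exact hx_ne a rfl

end

theorem smul_mem_upgmaConeC1 {c : ℝ} (hc : 0 ≤ c) {d : Fin 6 → ℝ} (hd : d ∈ upgmaConeC1) :
    c • d ∈ upgmaConeC1 := by
  obtain ⟨h0, h1, h2, h3, h4, h5, h6, h7⟩ := hd
  refine ⟨fun i => mul_nonneg hc (h0 i), ?_, ?_, ?_, ?_, ?_, ?_, ?_⟩ <;>
    simp only [Pi.smul_apply, smul_eq_mul] <;> nlinarith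

theorem le_of_mem_upgmaCones {d : Fin 6 → ℝ} (hd₁ : d ∈ upgmaConeC1) (hd₂ : d ∈ upgmaConeC2)
    (h0 : d 0 = 0) (h1 : d 1 = 0) (h2 : d 2 = 0) : d 3 ≤ d 4 ∧ d 3 ≤ d 5 := by
  obtain ⟨-, -, -, -, -, -, hC₁, -⟩ := hd₁
  obtain ⟨-, -, -, -, -, -, hC₂, -⟩ := hd₂
  constructor <;> linarith

theorem isExtremeRay_upgmaCones_inter :
    IsExtremeRay (upgmaConeC1 ∩ upgmaConeC2) (![0, 0, 0, 1, 1, 1] : Fin 6 → ℝ) := by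
  refine ⟨⟨?_, ?_⟩, fun h => by simpa using congrFun h 3, ?_⟩
  · simp [upgmaConeC1, Fin.forall_fin_succ]; norm_num
  · simp [upgmaConeC2, Fin.forall_fin_succ]; norm_num
  rintro x ⟨hx₁, hx₂⟩ y ⟨hy₁, hy₂⟩ hxy
  have hsum : ∀ i, x i + y i = (![0, 0, 0, 1, 1, 1] : Fin 6 → ℝ) i := congrFun hxy
  have hzero : ∀ i : Fin 6, i < 3 → x i = 0 ∧ y i = 0 := fun i hi =>
    (add_eq_zero_iff_of_nonneg (hx₁.1 i) (hy₁.1 i)).1 (by rw [hsum]; fin_cases i <;> simp_all)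
  obtain ⟨hx0, hy0⟩ := hzero 0 (by decide)
  obtain ⟨hx1, hy1⟩ := hzero 1 (by decide)
  obtain ⟨hx2, hy2⟩ := hzero 2 (by decide)
  have hx := le_of_mem_upgmaCones hx₁ hx₂ hx0 hx1 hx2
  have hy := le_of_mem_upgmaCones hy₁ hy₂ hy0 hy1 hy2
  have h3 : x 3 + y 3 = 1 := hsum 3
  have h4 : x 4 + y 4 = 1 := hsum 4
  have h5 : x 5 + y 5 = 1 := hsum 5
  refine ⟨⟨x 3, hx₁.1 3, ?_⟩, ⟨y 3, hy₁.1 3, ?_⟩⟩ <;> ext i <;> fin_cases i <;>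
    simp <;> linarith

theorem not_isExtremeRay_upgmaConeC1 :
    ¬ IsExtremeRay upgmaConeC1 (![0, 0, 0, 1, 1, 1] : Fin 6 → ℝ) := by
  refine not_isExtremeRay_of_add_eq (x := ![0, 0, 0, 1, 1, 1 / 2]) (y := ![0, 0, 0, 0, 0, 1 / 2])
    ?_ ?_ ?_ fun a h => ?_
  · simp [upgmaConeC1, Fin.forall_fin_succ]
  · simp [upgmaConeC1, Fin.forall_fin_succ]
  · ext i; fin_cases i <;> norm_num
  · have h3 := congrFun h 3
    have h5 := congrFun h 5
    simp at h3 h5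
    linarith

theorem not_isExtremeRay_upgmaConeC2 :
    ¬ IsExtremeRay upgmaConeC2 (![0, 0, 0, 1, 1, 1] : Fin 6 → ℝ) := by
  refine not_isExtremeRay_of_add_eq (x := ![0, 0, 0, 1, 1 / 2, 1]) (y := ![0, 0, 0, 0, 1 / 2, 0])
    ?_ ?_ ?_ fun a h => ?_
  · simp [upgmaConeC2, Fin.forall_fin_succ]
  · simp [upgmaConeC2, Fin.forall_fin_succ]
  · ext i; fin_cases i <;> norm_num
  · have h3 := congrFun h 3
    have h4 := congrFun h 4
    simp at h3 h4
    linarith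

/-- The UPGMA cones do not form a fan: the vector `(0,0,0,1,1,1)` spans an extreme ray
of `P(C₁) ∩ P(C₂)` but is not an extreme ray of `P(C₁)` or of `P(C₂)`; hence
`P(C₁) ∩ P(C₂)` is not a common face (extreme subset) of the two cones. -/
theorem stmt15 :
    IsExtremeRay (upgmaConeC1 ∩ upgmaConeC2) (![0, 0, 0, 1, 1, 1] : Fin 6 → ℝ) ∧
    ¬ IsExtremeRay upgmaConeC1 (![0, 0, 0, 1, 1, 1] : Fin 6 → ℝ) ∧
    ¬ IsExtremeRay upgmaConeC2 (![0, 0, 0, 1, 1, 1] : Fin 6 → ℝ) ∧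
    ¬ (IsExtreme ℝ upgmaConeC1 (upgmaConeC1 ∩ upgmaConeC2) ∧
        IsExtreme ℝ upgmaConeC2 (upgmaConeC1 ∩ upgmaConeC2)) := by
  refine ⟨isExtremeRay_upgmaCones_inter, not_isExtremeRay_upgmaConeC1,
    not_isExtremeRay_upgmaConeC2, fun ⟨hface, _⟩ => not_isExtremeRay_upgmaConeC1 ?_⟩
  exact isExtremeRay_upgmaCones_inter.of_isExtreme
    (fun _ hc _ hd => smul_mem_upgmaConeC1 hc.le hd) hface
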